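/- Every simple level-1 network on X is fully tree-based: every subtree of a simple level-1 network whose leaf set is X is a spanning tree. -/

import Mathlib

open SimpleGraph

/-- Degree of a vertex (as the cardinality of its neighbour set). -/
noncomputable def deg {W : Type*} (G : SimpleGraph W) (v : W) : ℕ :=
  (G.neighborSet v).ncard

/-- `T` is a support-tree for `G` with leaf set `X`: a spanning tree of `G`
whose leaves (vertices of degree at most 1) are exactly `X`. -/
def IsSupportTree {W : Type*} (G T : SimpleGraph W) (X : Set W) : Prop :=
  T ≤ G ∧ T.IsTree ∧ {v | deg T v ≤ 1} = X

/-- A graph is tree-based on `X` if it has a support-tree with leaf set `X`. -/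
def TreeBased {W : Type*} (G : SimpleGraph W) (X : Set W) : Prop :=
  ∃ T, IsSupportTree G T X

/-- An unrooted phylogenetic network on `X`: a connected graph all of whose
vertices have degree 1 or 3 (allowing the single-vertex convention via `≤ 1`),
whose leaves are exactly `X`. -/
def IsNetwork {W : Type*} (G : SimpleGraph W) (X : Set W) : Prop :=
  G.Connected ∧ (∀ v, deg G v ≤ 1 ∨ deg G v = 3) ∧ {v | deg G v ≤ 1} = X

/-- The old Mathlib (Dec 2024) meaning of `SimpleGraph.IsBridge`: `e` is an edge of `G`
and its endpoints are not reachable from one another once `e` is removed. -/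
def IsBridgeOld {W : Type*} (G : SimpleGraph W) (e : Sym2 W) : Prop :=
  e ∈ G.edgeSet ∧
    Sym2.lift ⟨fun v w => ¬(G \ fromEdgeSet {e}).Reachable v w, by simp [reachable_comm]⟩ e

/-- The cut-edge `{u,v}` induces a split of `X`: each side of the deleted edge
contains an element of `X`. -/
def InducesSplit {W : Type*} (G : SimpleGraph W) (X : Set W) (u v : W) : Prop :=
  (∃ a ∈ X, (G.deleteEdges {s(u, v)}).Reachable u a) ∧
    ∃ b ∈ X, (G.deleteEdges {s(u, v)}).Reachable v b

/-- A network is proper if every cut-edge induces a split of `X`. -/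
def ProperNet {W : Type*} (G : SimpleGraph W) (X : Set W) : Prop :=
  ∀ u v : W, IsBridgeOld G s(u, v) → InducesSplit G X u v

/-- A network is simple if every cut-edge is trivial, i.e. has a leaf endpoint. -/
def SimpleNet {W : Type*} (G : SimpleGraph W) (X : Set W) : Prop :=
  ∀ u v : W, IsBridgeOld G s(u, v) → u ∈ X ∨ v ∈ X

/-- A graph is bridgeless if it has no cut-edge. -/
def Bridgeless {W : Type*} (H : SimpleGraph W) : Prop :=
  ∀ e, ¬ IsBridgeOld H e

/-- A blob of `G`: a maximal connected subgraph without a cut-edge that is not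
a single vertex. -/
def IsBlob {W : Type*} (G : SimpleGraph W) (B : G.Subgraph) : Prop :=
  B.verts.Nontrivial ∧ B.Connected ∧ Bridgeless B.coe ∧
    ∀ B' : G.Subgraph, B'.verts.Nontrivial → B'.Connected → Bridgeless B'.coe →
      B ≤ B' → B = B'

/-- The simple network `B_N` associated to a blob `B`: the union of `B` with
all cut-edges of `G` incident to `B`. -/
def blobNet {W : Type*} (G : SimpleGraph W) (B : G.Subgraph) : G.Subgraph where
  verts := B.verts ∪ {w | ∃ u ∈ B.verts, IsBridgeOld G s(u, w)}
  Adj a b := B.Adj a b ∨ (IsBridgeOld G s(a, b) ∧ (a ∈ B.verts ∨ b ∈ B.verts))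
  adj_sub := by
    rintro v w (h | ⟨h, -⟩)
    · exact B.adj_sub h
    · exact (SimpleGraph.mem_edgeSet G).mp h.1
  edge_vert := by
    rintro v w (h | ⟨h, hv | hw⟩)
    · exact Or.inl (B.edge_vert h)
    · exact Or.inl hv
    · exact Or.inr ⟨w, hw, by rwa [Sym2.eq_swap]⟩
  symm := ⟨by
    rintro v w (h | ⟨h, hc⟩)
    · exact Or.inl (B.adj_symm h)
    · exact Or.inr ⟨by rwa [Sym2.eq_swap], hc.symm⟩⟩

/-- The leaf set of `B_N`: endpoints of incident cut-edges not lying in `B`. -/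
def blobNetLeaves {W : Type*} (G : SimpleGraph W) (B : G.Subgraph) :
    Set (blobNet G B).verts :=
  {w | (w : W) ∉ B.verts}

/-- `G` is a level-`k` network: at most `k` edges must be removed from each
blob to obtain a tree. -/
def Level {W : Type*} (G : SimpleGraph W) (k : ℕ) : Prop :=
  ∀ B : G.Subgraph, IsBlob G B → B.edgeSet.ncard ≤ B.verts.ncard - 1 + k
/-- The network `N − x`: delete leaf `x` and its incident edge and suppress the
resulting degree-2 vertex `v` (the former neighbour of `x`). -/
def suppressAdj {V : Type*} (G : SimpleGraph V) (x v : V) :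
    SimpleGraph {w : V // w ≠ x ∧ w ≠ v} where
  Adj a b := a ≠ b ∧ (G.Adj a b ∨ (G.Adj v a ∧ G.Adj v b))
  symm := ⟨by
    rintro a b ⟨h1, h2 | ⟨h3, h4⟩⟩
    · exact ⟨h1.symm, Or.inl h2.symm⟩
    · exact ⟨h1.symm, Or.inr ⟨h4, h3⟩⟩⟩
  loopless := ⟨by rintro a ⟨h1, -⟩; exact h1 rfl⟩

/-- The network `C_e(x,y)`: replace the edge `e = {u,v}` of `C` by a path
`u – w₁ – w₂ – v` and attach pendant leaves `x = Sum.inr 2` to `w₁ = Sum.inr 0`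
and `y = Sum.inr 3` to `w₂ = Sum.inr 1`. -/
def extGraph {W : Type*} (C : SimpleGraph W) (u v : W) : SimpleGraph (W ⊕ Fin 4) :=
  SimpleGraph.fromEdgeSet
    ((Sym2.map Sum.inl) '' (C.edgeSet \ {s(u, v)}) ∪
      {s(Sum.inl u, Sum.inr 0), s(Sum.inr 0, Sum.inr 1), s(Sum.inr 1, Sum.inl v),
       s(Sum.inr 0, Sum.inr 2), s(Sum.inr 1, Sum.inr 3)})

/-- The leaves `x` and `y` of `C_e(x,y)`. -/
def extLeaves (W : Type*) : Set (W ⊕ Fin 4) := {Sum.inr 2, Sum.inr 3}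

/-- The Petersen graph, realized as the Kneser graph K(5,2). -/
def petersen : SimpleGraph {s : Finset (Fin 5) // s.card = 2} where
  Adj a b := Disjoint (a : Finset (Fin 5)) (b : Finset (Fin 5))
  symm := ⟨fun a b h => h.symm⟩
  loopless := ⟨fun a h => by
    have h2 : (a : Finset (Fin 5)) = ∅ := by
      simpa using disjoint_self.mp h
    have := a.2
    rw [h2] at this
    simp at this⟩

/-- `D` is an orientation of the edges of `G`. -/
def IsOrientation {V : Type*} (G : SimpleGraph V) (D : V → V → Prop) : Prop :=
  (∀ u v, G.Adj u v ↔ (D u v ∨ D v u)) ∧ ∀ u v, ¬ (D u v ∧ D v u)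

noncomputable def outdeg {α : Type*} (r : α → α → Prop) (v : α) : ℕ := {w | r v w}.ncard
noncomputable def indeg {α : Type*} (r : α → α → Prop) (v : α) : ℕ := {w | r w v}.ncard

/-- A rooted (binary) phylogenetic network with root `ρ` and leaf set `Y`:
a DAG with a unique root of indegree 0 and outdegree 2, leaves (outdegree 0,
indegree 1) exactly `Y`, and all non-root vertices of total degree 1 or 3. -/
def IsRootedNetwork {α : Type*} (r : α → α → Prop) (ρ : α) (Y : Set α) : Prop :=
  (∀ v, ¬ Relation.TransGen r v v) ∧
  indeg r ρ = 0 ∧ outdeg r ρ = 2 ∧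
  (∀ v, indeg r v = 0 → v = ρ) ∧
  (∀ v, v ≠ ρ → indeg r v + outdeg r v = 1 ∨ indeg r v + outdeg r v = 3) ∧
  {v | outdeg r v = 0} = Y ∧ (∀ v ∈ Y, indeg r v = 1)

/-- A rooted network is tree-based if it contains a spanning arborescence
rooted at `ρ` whose leaf set is `Y`. -/
def RootedTreeBased {α : Type*} (r : α → α → Prop) (ρ : α) (Y : Set α) : Prop :=
  ∃ t : α → α → Prop, (∀ a b, t a b → r a b) ∧
    (∀ v, Relation.ReflTransGen t ρ v) ∧
    (∀ v, v ≠ ρ → indeg t v = 1) ∧ indeg t ρ = 0 ∧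
    {v | outdeg t v = 0} = Y

/-- `T` is obtained from `T'` by suppressing all degree-2 vertices, via the
embedding `f` of the vertices of `T` into those of `T'`. -/
def Suppresses {A B : Type*} (T' : SimpleGraph A) (T : SimpleGraph B) (f : B → A) : Prop :=
  Function.Injective f ∧
  (∀ a : A, deg T' a ≠ 2 → a ∈ Set.range f) ∧
  (∀ b : B, deg T' (f b) ≠ 2) ∧
  ∀ b b' : B, T.Adj b b' ↔
    ∃ p : T'.Walk (f b) (f b'), p.IsPath ∧
      ∀ a ∈ p.support, a ≠ f b → a ≠ f b' → deg T' a = 2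

/-- `G` is fully tree-based on `X`: every subtree of `G` whose leaf set is `X`
is spanning (hence a support-tree). -/
def FullyTreeBased {W : Type*} (G : SimpleGraph W) (X : Set W) : Prop :=
  ∀ H : G.Subgraph, H.Connected → H.coe.IsAcyclic →
    {v | v ∈ H.verts ∧ (H.neighborSet v).ncard ≤ 1} = X → H.IsSpanning

/-!
Let `v` be a vertex of degree 3 in a simple level-1 network. If no neighbour of `v` were a leaf,
none of the three edges at `v` would be a cut-edge, so each lies on a cycle. The union of these
cycles is connected and bridgeless, hence lies in a blob in which `v` has degree 3 and every
vertex has degree at least 2. By the handshake lemma such a blob has more edges than vertices,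
contradicting level 1. So `v` is adjacent to a leaf `x`, and `X` has a second leaf. A subtree with
leaf set `X` contains `x` and that second leaf, so `x` has a neighbour in the subtree; its only
neighbour in the network is `v`.
-/

section

variable {V : Type*} {G : SimpleGraph V}

namespace SimpleGraph

lemma exists_adj_ne_of_not_isBridge {u w : V} (h : G.Adj u w) (hb : ¬ G.IsBridge s(u, w)) :
    ∃ w', G.Adj u w' ∧ w' ≠ w := by
  obtain ⟨p⟩ : (G.deleteEdges {s(u, w)}).Reachable u w := not_not.mp hb
  cases p with
  | nil => exact absurd rfl h.ne
  | cons hadj _ =>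
    rw [deleteEdges_adj, Set.mem_singleton_iff] at hadj
    refine ⟨_, hadj.1, ?_⟩
    rintro rfl
    exact hadj.2 rfl

lemma ncard_neighborSet_le_two_of_ncard_edgeSet_le [Finite V]
    (hmin : ∀ v, 2 ≤ (G.neighborSet v).ncard) (hE : G.edgeSet.ncard ≤ Nat.card V) (v : V) :
    (G.neighborSet v).ncard ≤ 2 := by
  classical
  have := Fintype.ofFinite V
  have hdeg : ∀ u, G.degree u = (G.neighborSet u).ncard := fun u => by
    rw [← card_neighborSet_eq_degree, ← Nat.card_eq_fintype_card, Nat.card_coe_set_eq]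
  have hsum : ∑ u, G.degree u ≤ ∑ _u : V, 2 := by
    rw [sum_degrees_eq_twice_card_edges, Finset.sum_const, Finset.card_univ, smul_eq_mul,
      ← Nat.card_eq_fintype_card, ← Set.ncard_coe_finset, coe_edgeFinset]
    omega
  have hall := (Finset.sum_eq_sum_iff_of_le fun u _ => (hdeg u).symm ▸ hmin u).mp
    (le_antisymm (Finset.sum_le_sum fun u _ => (hdeg u).symm ▸ hmin u) hsum)
  exact (hdeg v ▸ hall v (Finset.mem_univ v)).ge

lemma eq_of_adj_of_ncard_neighborSet_le_one [Finite V] {x v w : V}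
    (hx : (G.neighborSet x).ncard ≤ 1) (hv : G.Adj x v) (hw : G.Adj x w) : v = w :=
  (Set.ncard_le_one (Set.toFinite _)).mp hx v hv w hw

namespace Subgraph

lemma connected_iSup {ι : Type*} [Nonempty ι] {f : ι → G.Subgraph} {v : V}
    (hf : ∀ i, (f i).Connected) (hv : ∀ i, v ∈ (f i).verts) : (⨆ i, f i).Connected := by
  rw [connected_iff_forall_exists_walk_subgraph]
  refine ⟨⟨v, by simpa [verts_iSup] using ⟨Classical.arbitrary ι, hv _⟩⟩, ?_⟩
  intro x y hx hy
  simp only [verts_iSup, Set.mem_iUnion] at hx hy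
  obtain ⟨i, hx⟩ := hx
  obtain ⟨j, hy⟩ := hy
  obtain ⟨p, hp⟩ := (preconnected_iff_forall_exists_walk_subgraph _).mp
    (hf i).preconnected hx (hv i)
  obtain ⟨q, hq⟩ := (preconnected_iff_forall_exists_walk_subgraph _).mp
    (hf j).preconnected (hv j) hy
  refine ⟨p.append q, ?_⟩
  rw [Walk.toSubgraph_append]
  exact sup_le (hp.trans (le_iSup f i)) (hq.trans (le_iSup f j))

lemma ncard_coe_neighborSet (C : G.Subgraph) (v : C.verts) :
    (C.coe.neighborSet v).ncard = (C.neighborSet v).ncard := by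
  rw [← Nat.card_coe_set_eq, ← Nat.card_coe_set_eq]
  exact Nat.card_congr (Subgraph.coeNeighborSetEquiv v)

lemma ncard_coe_edgeSet (C : G.Subgraph) : C.coe.edgeSet.ncard = C.edgeSet.ncard := by
  rw [← C.image_coe_edgeSet_coe,
    Set.ncard_image_of_injective _ (Sym2.map.injective Subtype.val_injective)]

end Subgraph

end SimpleGraph

lemma isBridgeOld_iff {e : Sym2 V} : IsBridgeOld G e ↔ e ∈ G.edgeSet ∧ G.IsBridge e := Iff.rfl

lemma Bridgeless.two_le_ncard_neighborSet [Finite V] [Nontrivial V] (hG : G.Preconnected)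
    (hb : Bridgeless G) (v : V) : 2 ≤ (G.neighborSet v).ncard := by
  obtain ⟨w, hw⟩ := hG.exists_adj_of_nontrivial v
  obtain ⟨w', hw', hne⟩ :=
    exists_adj_ne_of_not_isBridge hw fun h => hb _ (isBridgeOld_iff.mpr ⟨hw, h⟩)
  exact (Set.one_lt_ncard (Set.toFinite _)).mpr ⟨w, hw, w', hw', hne.symm⟩

lemma bridgeless_coe_of_forall_adj_mem_isCycle {C : G.Subgraph}
    (h : ∀ a b, C.Adj a b → ∃ (u : V) (p : G.Walk u u), p.IsCycle ∧ s(a, b) ∈ p.edges ∧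
      p.toSubgraph ≤ C) : Bridgeless C.coe := by
  intro e hbr
  induction e using Sym2.ind with | h a b => ?_
  obtain ⟨u, p, hp, hab, hle⟩ := h a b (isBridgeOld_iff.mp hbr).1
  let q := p.mapToSubgraph.map (Subgraph.inclusion hle)
  have hq : q.map C.hom = p := by
    rw [Walk.map_map]
    exact p.map_mapToSubgraph_hom
  have hqc : q.IsCycle := by
    rwa [← Walk.isCycle_map_iff_of_injective Subgraph.hom_injective, hq]
  refine (isBridgeOld_iff.mp hbr).2.notMem_edges_of_isCycle hqc ?_
  have hab' : s((a : V), b) ∈ (q.map C.hom).edges := by rw [hq]; exact hab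
  rw [Walk.edges_map, List.mem_map] at hab'
  obtain ⟨e, he, hee⟩ := hab'
  rwa [← Sym2.map.injective Subgraph.hom_injective (hee.trans (Sym2.map_mk _ _ _).symm)]

lemma exists_isBlob_le [Finite V] {B : G.Subgraph} (hnt : B.verts.Nontrivial)
    (hc : B.Connected) (hb : Bridgeless B.coe) : ∃ m, IsBlob G m ∧ B ≤ m := by
  obtain ⟨m, ⟨hmnt, hmc, hmb, hBm⟩, hmax⟩ := Set.Finite.exists_maximalFor id
    {C : G.Subgraph | C.verts.Nontrivial ∧ C.Connected ∧ Bridgeless C.coe ∧ B ≤ C}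
    (Set.toFinite _) ⟨B, hnt, hc, hb, le_rfl⟩
  exact ⟨m, ⟨hmnt, hmc, hmb, fun C hCnt hCc hCb hmC =>
    le_antisymm hmC (hmax ⟨hCnt, hCc, hCb, hBm.trans hmC⟩ hmC)⟩, hBm⟩

lemma IsBlob.ncard_neighborSet_le_two [Finite V] (hL : Level G 1) {m : G.Subgraph}
    (hm : IsBlob G m) (v : V) : (m.neighborSet v).ncard ≤ 2 := by
  by_cases hv : v ∈ m.verts
  · have hlevel := hL m hm
    obtain ⟨hnt, hc, hb, -⟩ := hm
    have := hnt.coe_sort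
    rw [← m.ncard_coe_neighborSet ⟨v, hv⟩]
    refine ncard_neighborSet_le_two_of_ncard_edgeSet_le
      (fun u => hb.two_le_ncard_neighborSet hc.preconnected.coe u) ?_ _
    have hcard := (Set.one_lt_ncard_iff_nontrivial (s := m.verts)).mpr hnt
    rw [m.ncard_coe_edgeSet, Nat.card_coe_set_eq]
    omega
  · have : m.neighborSet v = ∅ :=
      Set.eq_empty_of_forall_notMem fun w (hw : m.Adj v w) => hv hw.fst_mem
    simp [this]

lemma ncard_neighborSet_le_two_of_forall_not_isBridge [Finite V] (hL : Level G 1) {v : V}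
    (h : ∀ w, G.Adj v w → ¬ G.IsBridge s(v, w)) : (G.neighborSet v).ncard ≤ 2 := by
  rcases (G.neighborSet v).eq_empty_or_nonempty with hempty | ⟨w₀, hw₀⟩
  · simp [hempty]
  have : Nonempty (G.neighborSet v) := ⟨⟨w₀, hw₀⟩⟩
  have hcycle (w : G.neighborSet v) :
      ∃ (u : V) (c : G.Walk u u), c.IsCycle ∧ s(v, w) ∈ c.edges := by
    simpa using (isBridge_iff_forall_cycle_notMem (G.mem_edgeSet.mpr w.2)).not.mp (h w w.2)
  choose u c hc hvc using hcycle
  set B : G.Subgraph := ⨆ w, (c w).toSubgraph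
  have hvB (w : G.neighborSet v) : B.Adj v w :=
    Subgraph.iSup_adj.mpr ⟨w, (c w).adj_toSubgraph_iff_mem_edges.mpr (hvc w)⟩
  have hBc : B.Connected := Subgraph.connected_iSup (fun w => (c w).toSubgraph_connected)
    fun w => (c w).mem_verts_toSubgraph.mpr ((c w).fst_mem_support_of_mem_edges (hvc w))
  have hBb : Bridgeless B.coe := bridgeless_coe_of_forall_adj_mem_isCycle fun a b hab => by
    obtain ⟨w, hw⟩ := Subgraph.iSup_adj.mp hab
    exact ⟨u w, c w, hc w, (c w).adj_toSubgraph_iff_mem_edges.mp hw,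
      le_iSup (fun w => (c w).toSubgraph) w⟩
  have hBnt : B.verts.Nontrivial :=
    ⟨v, (hvB ⟨w₀, hw₀⟩).fst_mem, w₀, (hvB ⟨w₀, hw₀⟩).snd_mem, hw₀.ne⟩
  obtain ⟨m, hm, hBm⟩ := exists_isBlob_le hBnt hBc hBb
  calc (G.neighborSet v).ncard ≤ (m.neighborSet v).ncard :=
        Set.ncard_le_ncard (fun w hw => hBm.2 (hvB ⟨w, hw⟩)) (Set.toFinite _)
    _ ≤ 2 := hm.ncard_neighborSet_le_two hL v

namespace IsNetwork

variable {X : Set V}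

lemma mem_iff (hN : IsNetwork G X) {x : V} : x ∈ X ↔ deg G x ≤ 1 := by
  rw [← hN.2.2]
  rfl

lemma deg_eq_three_of_notMem (hN : IsNetwork G X) {x : V} (hx : x ∉ X) : deg G x = 3 :=
  (hN.2.1 x).resolve_left (hN.mem_iff.not.mp hx)

lemma exists_adj_mem [Finite V] (hN : IsNetwork G X) (hS : SimpleNet G X) (hL : Level G 1)
    {v : V} (hv : deg G v = 3) : ∃ x ∈ X, G.Adj v x := by
  by_contra! hcon
  have hvX : v ∉ X := by rw [hN.mem_iff]; omega
  have := ncard_neighborSet_le_two_of_forall_not_isBridge hL fun w hw hbr =>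
    (hS v w (isBridgeOld_iff.mpr ⟨hw, hbr⟩)).elim hvX (hcon w · hw)
  unfold deg at hv
  omega

lemma exists_mem_ne [Finite V] (hN : IsNetwork G X) (hS : SimpleNet G X) (hL : Level G 1)
    {v x : V} (hv : deg G v = 3) (hx : x ∈ X) (hvx : G.Adj v x) : ∃ y ∈ X, y ≠ x := by
  obtain ⟨w, hvw, hwx⟩ := Set.exists_ne_of_one_lt_ncard (s := G.neighborSet v)
    (by unfold deg at hv; omega) x
  by_cases hw : w ∈ X
  · exact ⟨w, hw, hwx⟩
  obtain ⟨y, hy, hwy⟩ := hN.exists_adj_mem hS hL (hN.deg_eq_three_of_notMem hw)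
  refine ⟨y, hy, ?_⟩
  rintro rfl
  exact G.ne_of_adj hvw
    (eq_of_adj_of_ncard_neighborSet_le_one (hN.mem_iff.mp hy) hvx.symm hwy.symm)

end IsNetwork

end

/-- Every simple level-1 network is fully tree-based: every subtree with leaf
set `X` is spanning. -/
theorem stmt17 {V : Type*} [Fintype V] (G : SimpleGraph V) (X : Set V)
    (hN : IsNetwork G X) (hS : SimpleNet G X) (hL : Level G 1) :
    FullyTreeBased G X := by
  intro H hH _ hHX
  have hXH : X ⊆ H.verts := fun x hx => (hHX.symm ▸ hx : x ∈ {v | v ∈ H.verts ∧ _}).1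
  intro v
  by_cases hvX : v ∈ X
  · exact hXH hvX
  have hv := hN.deg_eq_three_of_notMem hvX
  obtain ⟨x, hx, hvx⟩ := hN.exists_adj_mem hS hL hv
  obtain ⟨y, hy, hyx⟩ := hN.exists_mem_ne hS hL hv hx hvx
  have : Nontrivial H.verts := ⟨⟨y, hXH hy⟩, ⟨x, hXH hx⟩, fun h => hyx congr($h.1)⟩
  obtain ⟨w, hxw⟩ := hH.preconnected.exists_adj_of_nontrivial ⟨x, hXH hx⟩
  obtain rfl : w = v :=
    eq_of_adj_of_ncard_neighborSet_le_one (hN.mem_iff.mp hx) (H.adj_sub hxw) hvx.symm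
  exact hxw.snd_mem
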